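/- For the operators A₀, B₀ ∈ B(H): (1) for every x ∈ H, the infimum over y ∈ H of ( Re⟨A₀y, y⟩ + Re⟨B₀(x − y), x − y⟩ ) equals 0 (that is, the parallel sum A₀ : B₀ = 0); and (2) there is no X ∈ B(H) such that X* ∘ A₀ ∘ X + (1 − X)* ∘ B₀ ∘ (1 − X) = 0. Consequently the equation A₀ : B₀ = X*A₀X + (1−X)*B₀(1−X) has no solution X ∈ B(H). -/

import Mathlib

open scoped ENNReal InnerProductSpace

noncomputable section

/-- The Hilbert space `ℓ²(ℕ, ℂ)`. -/
abbrev H₀ : Type := lp (fun _ : ℕ => ℂ) 2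

lemma norm_coeff_le (n : ℕ) : ‖((n : ℂ) + 1)⁻¹‖ ≤ 1 := by
  rw [norm_inv]
  rw [show ((n : ℂ) + 1) = ((n + 1 : ℕ) : ℂ) by push_cast; ring]
  rw [Complex.norm_natCast, inv_le_one_iff₀]
  right
  exact_mod_cast Nat.one_le_iff_ne_zero.mpr (Nat.succ_ne_zero n)

lemma memS (x : H₀) : Memℓp (fun n : ℕ => ((n : ℂ) + 1)⁻¹ * x n) 2 := by
  apply memℓp_gen
  have hx : Summable fun n => ‖x n‖ ^ (2 : ℝ≥0∞).toReal :=
    (lp.memℓp x).summable (by norm_num)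
  refine Summable.of_nonneg_of_le (fun n => Real.rpow_nonneg (norm_nonneg _) _)
    (fun n => ?_) hx
  apply Real.rpow_le_rpow (norm_nonneg _) ?_ (by norm_num)
  rw [norm_mul]
  calc ‖((n : ℂ) + 1)⁻¹‖ * ‖x n‖ ≤ 1 * ‖x n‖ :=
        mul_le_mul_of_nonneg_right (norm_coeff_le n) (norm_nonneg _)
    _ = ‖x n‖ := one_mul _

/-- The diagonal operator `(S x)ₙ = xₙ / (n + 1)` on `ℓ²(ℕ, ℂ)`. -/
def S : H₀ →L[ℂ] H₀ :=
  LinearMap.mkContinuous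
    { toFun := fun x => (⟨fun n : ℕ => ((n : ℂ) + 1)⁻¹ * x n, memS x⟩ : H₀)
      map_add' := fun x y => by
        apply lp.ext
        funext n
        show ((n : ℂ) + 1)⁻¹ * (x n + y n) = ((n : ℂ) + 1)⁻¹ * x n + ((n : ℂ) + 1)⁻¹ * y n
        ring
      map_smul' := fun c x => by
        apply lp.ext
        funext n
        show ((n : ℂ) + 1)⁻¹ * (c * x n) = c * (((n : ℂ) + 1)⁻¹ * x n)
        ring }
    1
    (fun x => by
      rw [one_mul]
      refine lp.norm_le_of_tsum_le (by norm_num) (norm_nonneg _) ?_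
      have hx2 : ‖x‖ ^ (2 : ℝ≥0∞).toReal = ∑' n, ‖x n‖ ^ (2 : ℝ≥0∞).toReal :=
        lp.norm_rpow_eq_tsum (by norm_num) x
      rw [hx2]
      refine Summable.tsum_le_tsum (fun n => ?_) ?_ ((lp.memℓp x).summable (by norm_num))
      · apply Real.rpow_le_rpow (norm_nonneg _) ?_ (by norm_num)
        show ‖((n : ℂ) + 1)⁻¹ * x n‖ ≤ ‖x n‖
        rw [norm_mul]
        calc ‖((n : ℂ) + 1)⁻¹‖ * ‖x n‖ ≤ 1 * ‖x n‖ :=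
              mul_le_mul_of_nonneg_right (norm_coeff_le n) (norm_nonneg _)
          _ = ‖x n‖ := one_mul _
      · exact (memS x).summable (by norm_num))

/-- The Hilbert space direct sum `H = ℓ²(ℕ, ℂ) ⊕ ℓ²(ℕ, ℂ)`. -/
abbrev H : Type := WithLp 2 (H₀ × H₀)

/-- The block operator `[[T₁₁, T₁₂],[T₂₁, T₂₂]]` on `H = H₀ ⊕ H₀`. -/
def block (T₁₁ T₁₂ T₂₁ T₂₂ : H₀ →L[ℂ] H₀) : H →L[ℂ] H :=
  ((WithLp.prodContinuousLinearEquiv 2 ℂ H₀ H₀).symm.toContinuousLinearMap.comp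
    ((T₁₁.comp (ContinuousLinearMap.fst ℂ H₀ H₀) +
        T₁₂.comp (ContinuousLinearMap.snd ℂ H₀ H₀)).prod
      (T₂₁.comp (ContinuousLinearMap.fst ℂ H₀ H₀) +
        T₂₂.comp (ContinuousLinearMap.snd ℂ H₀ H₀)))).comp
    (WithLp.prodContinuousLinearEquiv 2 ℂ H₀ H₀).toContinuousLinearMap

/-- The operator `A₀ = [[I, S],[S, S²]]` on `H`. -/
def A₀ : H →L[ℂ] H := block 1 S S (S * S)

/-- The operator `B₀ = [[I, 0],[0, 0]]` on `H`. -/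
def B₀ : H →L[ℂ] H := block 1 0 0 0

/-- `G = f(S)⁻¹` where `f(t) = √(t² + 2t + 2)`: the inverse of the positive square root
of `S² + 2S + 2I`. -/
def G : H₀ →L[ℂ] H₀ := Ring.inverse (@CFC.rpow (H₀ →L[ℂ] H₀) _ _ _ _ _ _
  IsSelfAdjoint.instContinuousFunctionalCalculus _ (S * S + 2 * S + 2) (1/2 : ℝ))

/-- The operator `R = [[G(S+2I), GS],[GS, GS(S+I)]]`, the positive square root of `A₀ + B₀`. -/
def R : H →L[ℂ] H := block (G * (S + 2)) (G * S) (G * S) (G * S * (S + 1))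

/-- The operator `X₀ = [[G(S+I), 0],[-G, 0]]`, the unique solution of `R X = B₀`. -/
def X₀ : H →L[ℂ] H := block (G * (S + 1)) 0 (-G) 0


/-!
The quadratic form of `A₀` is `‖y₁ + S y₂‖²` and that of `B₀` is `‖y₁‖²`. Taking `y₁ = x₁`, the
infimum defining `A₀ : B₀` at `x` is at most `inf_v ‖x₁ + S v‖²`, which vanishes because `S` has
dense range. A solution `X` would attain this infimum at `y = X x` for every `x`, which forces
every `x₁` into the range of `S`. But `(1/(n+1))ₙ ∈ ℓ²` is `S` of the constant sequence `1`,
which is not in `ℓ²`.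
-/

def parallelSumForm {E : Type*} [NormedAddCommGroup E] [InnerProductSpace ℂ E]
    (A B : E →L[ℂ] E) (x y : E) : ℝ :=
  (⟪A y, y⟫_ℂ).re + (⟪B (x - y), x - y⟫_ℂ).re

lemma re_inner_adjoint_comp_comp_add_self {E : Type*} [NormedAddCommGroup E]
    [InnerProductSpace ℂ E] [CompleteSpace E] (A B X : E →L[ℂ] E) (z : E) :
    (⟪(((ContinuousLinearMap.adjoint X).comp A).comp X +
        ((ContinuousLinearMap.adjoint (1 - X)).comp B).comp (1 - X) : E →L[ℂ] E) z, z⟫_ℂ).re =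
      parallelSumForm A B z (X z) := by
  simp only [parallelSumForm, add_apply, ContinuousLinearMap.comp_apply, inner_add_left,
    ContinuousLinearMap.adjoint_inner_left, sub_apply, one_apply_eq_self, Complex.add_re]

lemma not_memℓp_const {ι E : Type*} [Infinite ι] [NormedAddCommGroup E] {p : ℝ≥0∞}
    (hp : 0 < p.toReal) {c : E} (hc : c ≠ 0) : ¬Memℓp (fun _ : ι => c) p := fun h => by
  simpa [hc, hp.ne'] using (summable_const_iff _).1 (h.summable hp)

lemma S_apply (x : H₀) (n : ℕ) : S x n = ((n : ℂ) + 1)⁻¹ * x n := rfl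

lemma inner_S_left (u v : H₀) : ⟪S u, v⟫_ℂ = ⟪u, S v⟫_ℂ := by
  simp only [lp.inner_eq_tsum]
  refine tsum_congr fun n => ?_
  simp only [RCLike.inner_apply, S_apply, map_mul, map_inv₀, map_add, map_natCast, map_one]
  ring

lemma S_single (n : ℕ) (c : ℂ) :
    S (lp.single 2 n c) = lp.single 2 n (((n : ℂ) + 1)⁻¹ * c) := by
  ext m
  by_cases h : m = n
  · subst h
    simp only [S_apply, lp.single_apply_self]
  · simp only [S_apply, lp.single_apply_ne 2 n _ h, mul_zero]

lemma single_mem_range_S (n : ℕ) (c : ℂ) : (lp.single 2 n c : H₀) ∈ Set.range S :=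
  ⟨lp.single 2 n (((n : ℂ) + 1) * c), by
    rw [S_single, inv_mul_cancel_left₀ (Nat.cast_add_one_ne_zero n)]⟩

lemma denseRange_S : DenseRange S := by
  intro x
  rw [← ContinuousLinearMap.coe_coe, ← LinearMap.coe_range]
  exact mem_closure_of_tendsto (lp.hasSum_single ENNReal.ofNat_ne_top x)
    (Filter.Eventually.of_forall fun s => Submodule.sum_mem _ fun n _ =>
      LinearMap.mem_range.2 (single_mem_range_S n (x n)))

lemma memℓp_harmonic : Memℓp (fun n : ℕ => ((n : ℂ) + 1)⁻¹) 2 := by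
  refine memℓp_gen ((summable_nat_add_iff 1).2
    (Real.summable_one_div_nat_pow.2 one_lt_two) |>.congr fun n => ?_)
  rw [← Nat.cast_add_one, norm_inv, Complex.norm_natCast]
  norm_num

def harmonicVec : H₀ := ⟨fun n : ℕ => ((n : ℂ) + 1)⁻¹, memℓp_harmonic⟩

lemma harmonicVec_not_mem_range_S : harmonicVec ∉ Set.range S := by
  rintro ⟨w, hw⟩
  have hw_one : ∀ n, w n = 1 := fun n => by
    simpa [S_apply, harmonicVec, Nat.cast_add_one_ne_zero] using congrArg (fun u : H₀ => u n) hw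
  exact not_memℓp_const (by norm_num) one_ne_zero (funext hw_one ▸ lp.memℓp w)

lemma inner_block_self (T₁₁ T₁₂ T₂₁ T₂₂ : H₀ →L[ℂ] H₀) (z : H) :
    ⟪block T₁₁ T₁₂ T₂₁ T₂₂ z, z⟫_ℂ =
      ⟪T₁₁ z.fst + T₁₂ z.snd, z.fst⟫_ℂ + ⟪T₂₁ z.fst + T₂₂ z.snd, z.snd⟫_ℂ := rfl

lemma re_inner_A₀_self (y : H) : (⟪A₀ y, y⟫_ℂ).re = ‖y.fst + S y.snd‖ ^ 2 := by
  rw [A₀, inner_block_self, one_apply_eq_self, mul_apply_eq_comp, ← map_add, inner_S_left,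
    ← inner_add_right]
  exact inner_self_eq_norm_sq (𝕜 := ℂ) _

lemma re_inner_B₀_self (w : H) : (⟪B₀ w, w⟫_ℂ).re = ‖w.fst‖ ^ 2 := by
  rw [B₀, inner_block_self, one_apply_eq_self, zero_apply, zero_apply, add_zero, add_zero,
    inner_zero_left, add_zero]
  exact inner_self_eq_norm_sq (𝕜 := ℂ) _

lemma parallelSumForm_A₀_B₀ (x y : H) :
    parallelSumForm A₀ B₀ x y = ‖y.fst + S y.snd‖ ^ 2 + ‖x.fst - y.fst‖ ^ 2 := by
  rw [parallelSumForm, re_inner_A₀_self, re_inner_B₀_self, WithLp.sub_fst]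

lemma iInf_parallelSumForm_A₀_B₀ (x : H) : ⨅ y : H, parallelSumForm A₀ B₀ x y = 0 := by
  have hnonneg (y : H) : 0 ≤ parallelSumForm A₀ B₀ x y := by
    rw [parallelSumForm_A₀_B₀]
    positivity
  refine le_antisymm (le_of_forall_pos_lt_add fun ε hε => ?_) (le_ciInf hnonneg)
  obtain ⟨v, hv⟩ := Metric.denseRange_iff.1 denseRange_S (-x.fst) √ε (Real.sqrt_pos.2 hε)
  rw [dist_eq_norm, ← norm_neg, neg_sub, sub_neg_eq_add, add_comm,
    Real.lt_sqrt (norm_nonneg _)] at hv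
  calc ⨅ y : H, parallelSumForm A₀ B₀ x y
      ≤ parallelSumForm A₀ B₀ x (WithLp.toLp 2 (x.fst, v)) :=
        ciInf_le ⟨0, by rintro _ ⟨y, rfl⟩; exact hnonneg y⟩ _
    _ = ‖x.fst + S v‖ ^ 2 := by
        rw [parallelSumForm_A₀_B₀]
        simp
    _ < 0 + ε := by rwa [zero_add]

lemma fst_mem_range_S_of_parallelSumForm_eq_zero {x y : H}
    (h : parallelSumForm A₀ B₀ x y = 0) : x.fst ∈ Set.range S := by
  rw [parallelSumForm_A₀_B₀, add_eq_zero_iff_of_nonneg (by positivity) (by positivity),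
    sq_eq_zero_iff, sq_eq_zero_iff, norm_eq_zero, norm_eq_zero, sub_eq_zero] at h
  exact ⟨-y.snd, by rw [map_neg, h.2, neg_eq_iff_add_eq_zero, add_comm, h.1]⟩

/-- Theorem 6.10: the parallel sum `A₀ : B₀` is zero (its quadratic form vanishes identically),
yet the equation `A₀ : B₀ = X* A₀ X + (1 - X)* B₀ (1 - X)` has no solution `X ∈ B(H)`. -/
theorem parallel_sum_equation_unsolvable :
    (∀ x : H, (⨅ y : H, ((⟪A₀ y, y⟫_ℂ).re + (⟪B₀ (x - y), x - y⟫_ℂ).re)) = 0) ∧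
    ¬∃ X : H →L[ℂ] H,
      ((ContinuousLinearMap.adjoint X).comp A₀).comp X +
        ((ContinuousLinearMap.adjoint (1 - X)).comp B₀).comp (1 - X) = 0 := by
  refine ⟨iInf_parallelSumForm_A₀_B₀, fun ⟨X, hX⟩ => harmonicVec_not_mem_range_S ?_⟩
  let z : H := WithLp.toLp 2 (harmonicVec, 0)
  have hz := congrArg (fun T : H →L[ℂ] H => (⟪T z, z⟫_ℂ).re) hX
  simp only [re_inner_adjoint_comp_comp_add_self, zero_apply, inner_zero_left,
    Complex.zero_re] at hz
  exact fst_mem_range_S_of_parallelSumForm_eq_zero hz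

end
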